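/- arXiv:1502.03181 — 7 statements merged into one kernel-verified Lean document; each statement's English description precedes it below -/
import Mathlib

section
/- Consider the discrete-time LTI system x(l+1) = A x(l) + B u with a constant input u. That is, let x : ℕ → ℝⁿ satisfy x(0) = x₀ and x(l+1) = A x(l) + B u for all l, for a fixed u ∈ ℝᵐ. Then for every i ≥ 1: (i) x(i) = A^{(i)} x₀ + B^{(i)} u, and (ii) ∑_{l=0}^{i-1} ( x(l)ᵀ Q x(l) + uᵀ R u ) = x₀ᵀ Q^{(i)} x₀ + uᵀ R^{(i)} u + 2 x₀ᵀ N^{(i)} u. -/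
/-!
Unrolling the recursion gives `x l = A^l x₀ + B^{(l)} u` for every `l`, with `B^{(0)} = 0`.
The recursions for the weighting matrices telescope to
`Q^{(i)} = ∑_{l<i} (A^l)ᵀ Q A^l`, `R^{(i)} = ∑_{l<i} ((B^{(l)})ᵀ Q B^{(l)} + R)` and
`N^{(i)} = ∑_{l<i} (A^l)ᵀ Q B^{(l)}`, so the cost identity is the sum over `l < i` of the
expansion of the quadratic form `x lᵀ Q x l`, whose cross terms combine because `Q` is symmetric.
-/

open Matrix Finset

theorem Finset.eq_sum_range_of_add_succ {M : Type*} [AddCommMonoid M] {f d : ℕ → M}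
    (h1 : f 1 = d 0) (hsucc : ∀ i, 1 ≤ i → f (i + 1) = f i + d i) :
    ∀ i, 1 ≤ i → f i = ∑ l ∈ range i, d l := by
  intro i hi
  induction i, hi using Nat.le_induction with
  | base => simp [h1]
  | succ i hi ih => rw [hsucc i hi, ih, sum_range_succ]

namespace Matrix

variable {ι κ α : Type*} [Fintype ι] [CommSemiring α]

theorem sum_range_succ_pow_mul [DecidableEq ι] (A : Matrix ι ι α) (B : Matrix ι κ α) (i : ℕ) :
    ∑ q ∈ range (i + 1), A ^ q * B = A * ∑ q ∈ range i, A ^ q * B + B := by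
  simp only [sum_range_succ', pow_succ', Matrix.mul_assoc, Matrix.mul_sum, pow_zero,
    Matrix.one_mul]

theorem dotProduct_transpose_mul_mul_mulVec {ι' : Type*} [Fintype ι'] [Fintype κ]
    (M : Matrix ι' ι α) (P : Matrix ι' ι' α) (N : Matrix ι' κ α) (a : ι → α) (b : κ → α) :
    a ⬝ᵥ ((Mᵀ * P * N) *ᵥ b) = (M *ᵥ a) ⬝ᵥ (P *ᵥ (N *ᵥ b)) := by
  simp only [← mulVec_mulVec, dotProduct_mulVec, vecMul_transpose]

theorem IsSymm.dotProduct_mulVec_comm {Q : Matrix ι ι α} (hQ : Q.IsSymm) (a b : ι → α) :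
    a ⬝ᵥ (Q *ᵥ b) = b ⬝ᵥ (Q *ᵥ a) := by
  rw [dotProduct_mulVec, ← hQ, vecMul_transpose, dotProduct_comm, hQ]

theorem IsSymm.dotProduct_mulVec_add_self {Q : Matrix ι ι α} (hQ : Q.IsSymm) (a b : ι → α) :
    (a + b) ⬝ᵥ (Q *ᵥ (a + b)) = a ⬝ᵥ (Q *ᵥ a) + b ⬝ᵥ (Q *ᵥ b) + 2 * (a ⬝ᵥ (Q *ᵥ b)) := by
  rw [mulVec_add, add_dotProduct, dotProduct_add, dotProduct_add, hQ.dotProduct_mulVec_comm b a]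
  ring

theorem eq_pow_mulVec_add_sum_mulVec_of_succ [DecidableEq ι] [Fintype κ] {A : Matrix ι ι α}
    {B : Matrix ι κ α} {u : κ → α} {x : ℕ → ι → α} (hx : ∀ l, x (l + 1) = A *ᵥ x l + B *ᵥ u)
    (l : ℕ) :
    x l = (A ^ l) *ᵥ x 0 + (∑ q ∈ range l, A ^ q * B) *ᵥ u := by
  induction l with
  | zero => simp
  | succ l ih =>
    rw [hx l, ih, sum_range_succ_pow_mul, pow_succ', mulVec_add, add_mulVec, ← mulVec_mulVec,
      ← mulVec_mulVec]
    abel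

end Matrix

theorem lifted_dynamics_and_cost_collapse_general {n m : ℕ}
    (A : Matrix (Fin n) (Fin n) ℝ) (B : Matrix (Fin n) (Fin m) ℝ)
    (Q : Matrix (Fin n) (Fin n) ℝ) (R : Matrix (Fin m) (Fin m) ℝ)
    (hQ : Q.IsSymm)
    (Qg : ℕ → Matrix (Fin n) (Fin n) ℝ)
    (Rg : ℕ → Matrix (Fin m) (Fin m) ℝ)
    (Ng : ℕ → Matrix (Fin n) (Fin m) ℝ)
    (hQ1 : Qg 1 = Q) (hR1 : Rg 1 = R) (hN1 : Ng 1 = 0)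
    (hQrec : ∀ i, 1 ≤ i → Qg (i + 1) = Qg i + (A ^ i)ᵀ * Q * (A ^ i))
    (hRrec : ∀ i, 1 ≤ i → Rg (i + 1) =
      Rg i + (∑ q ∈ Finset.range i, A ^ q * B)ᵀ * Q * (∑ q ∈ Finset.range i, A ^ q * B) + R)
    (hNrec : ∀ i, 1 ≤ i → Ng (i + 1) =
      Ng i + (A ^ i)ᵀ * Q * (∑ q ∈ Finset.range i, A ^ q * B))
    (x₀ : Fin n → ℝ) (u : Fin m → ℝ) (x : ℕ → Fin n → ℝ)
    (hx0 : x 0 = x₀) (hx : ∀ l, x (l + 1) = A *ᵥ x l + B *ᵥ u)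
    (i : ℕ) (hi : 1 ≤ i) :
    x i = (A ^ i) *ᵥ x₀ + (∑ q ∈ Finset.range i, A ^ q * B) *ᵥ u ∧
    ∑ l ∈ Finset.range i, (x l ⬝ᵥ (Q *ᵥ x l) + u ⬝ᵥ (R *ᵥ u)) =
      x₀ ⬝ᵥ (Qg i *ᵥ x₀) + u ⬝ᵥ (Rg i *ᵥ u) + 2 * (x₀ ⬝ᵥ (Ng i *ᵥ u)) := by
  set S : ℕ → Matrix (Fin n) (Fin m) ℝ := fun l ↦ ∑ q ∈ range l, A ^ q * B
  have hstate (l : ℕ) : x l = (A ^ l) *ᵥ x₀ + S l *ᵥ u :=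
    hx0 ▸ eq_pow_mulVec_add_sum_mulVec_of_succ hx l
  have hQsum := eq_sum_range_of_add_succ (f := Qg) (d := fun l ↦ (A ^ l)ᵀ * Q * A ^ l)
    (by simp [hQ1]) hQrec
  have hRsum := eq_sum_range_of_add_succ (f := Rg) (d := fun l ↦ (S l)ᵀ * Q * S l + R)
    (by simp [S, hR1]) (fun i hi ↦ by rw [hRrec i hi, add_assoc])
  have hNsum := eq_sum_range_of_add_succ (f := Ng) (d := fun l ↦ (A ^ l)ᵀ * Q * S l)
    (by simp [S, hN1]) hNrec
  refine ⟨hstate i, ?_⟩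
  rw [hQsum i hi, hRsum i hi, hNsum i hi]
  simp only [sum_mulVec, dotProduct_sum, mul_sum, ← sum_add_distrib, add_mulVec, dotProduct_add]
  refine sum_congr rfl fun l _ ↦ ?_
  rw [hstate, hQ.dotProduct_mulVec_add_self, dotProduct_transpose_mul_mul_mulVec,
    dotProduct_transpose_mul_mul_mulVec, dotProduct_transpose_mul_mul_mulVec]
  ring

/-- lifted dynamics and collapsed finite-horizon cost for a
constant-input LTI system. -/
theorem lifted_dynamics_and_cost_collapse {n m : ℕ}
    (A : Matrix (Fin n) (Fin n) ℝ) (B : Matrix (Fin n) (Fin m) ℝ)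
    (Q : Matrix (Fin n) (Fin n) ℝ) (R : Matrix (Fin m) (Fin m) ℝ)
    (hQ : Q.IsSymm) (hR : R.IsSymm)
    (Qg : ℕ → Matrix (Fin n) (Fin n) ℝ)
    (Rg : ℕ → Matrix (Fin m) (Fin m) ℝ)
    (Ng : ℕ → Matrix (Fin n) (Fin m) ℝ)
    (hQ1 : Qg 1 = Q) (hR1 : Rg 1 = R) (hN1 : Ng 1 = 0)
    (hQrec : ∀ i, 1 ≤ i → Qg (i + 1) = Qg i + (A ^ i)ᵀ * Q * (A ^ i))
    (hRrec : ∀ i, 1 ≤ i → Rg (i + 1) =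
      Rg i + (∑ q ∈ Finset.range i, A ^ q * B)ᵀ * Q * (∑ q ∈ Finset.range i, A ^ q * B) + R)
    (hNrec : ∀ i, 1 ≤ i → Ng (i + 1) =
      Ng i + (A ^ i)ᵀ * Q * (∑ q ∈ Finset.range i, A ^ q * B))
    (x₀ : Fin n → ℝ) (u : Fin m → ℝ) (x : ℕ → Fin n → ℝ)
    (hx0 : x 0 = x₀) (hx : ∀ l, x (l + 1) = A *ᵥ x l + B *ᵥ u)
    (i : ℕ) (hi : 1 ≤ i) :
    x i = (A ^ i) *ᵥ x₀ + (∑ q ∈ Finset.range i, A ^ q * B) *ᵥ u ∧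
    ∑ l ∈ Finset.range i, (x l ⬝ᵥ (Q *ᵥ x l) + u ⬝ᵥ (R *ᵥ u)) =
      x₀ ⬝ᵥ (Qg i *ᵥ x₀) + u ⬝ᵥ (Rg i *ᵥ u) + 2 * (x₀ ⬝ᵥ (Ng i *ᵥ u)) :=
  lifted_dynamics_and_cost_collapse_general A B Q R hQ Qg Rg Ng hQ1 hR1 hN1 hQrec hRrec hNrec x₀ u x
    hx0 hx i hi
end

section
/- If Q and R are positive semidefinite, then for every i ≥ 1 and all x ∈ ℝⁿ, u ∈ ℝᵐ one has xᵀ Q^{(i)} x + uᵀ R^{(i)} u + 2 xᵀ N^{(i)} u ≥ 0. If moreover Q and R are positive definite, then xᵀ Q^{(i)} x + uᵀ R^{(i)} u + 2 xᵀ N^{(i)} u > 0 whenever (x,u) ≠ (0,0); in particular Q^{(i)} and R^{(i)} are positive definite. -/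
open Matrix Finset

/-!
Writing `J_i(x, u) = xᵀ Q^{(i)} x + uᵀ R^{(i)} u + 2 xᵀ N^{(i)} u`, the recursions say exactly that
`J_{i+1}(x, u) = J_i(x, u) + ‖A^i x + B^{(i)} u‖²_Q + ‖u‖²_R`, so `J_i` dominates
`J_1(x, u) = xᵀ Q x + uᵀ R u`. Positive definiteness of `Q^{(i)}` and `R^{(i)}` is separate and
simpler: each is `Q` resp. `R` plus a sum of congruences `Mᵀ Q M`.
-/

section StageCost

variable {ι κ α 𝕜 : Type*} [Fintype ι] [Fintype κ] [Fintype α] [CommRing 𝕜]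

def stageCost (Q : Matrix ι ι 𝕜) (R : Matrix κ κ 𝕜) (N : Matrix ι κ 𝕜) (x : ι → 𝕜)
    (u : κ → 𝕜) : 𝕜 :=
  x ⬝ᵥ (Q *ᵥ x) + u ⬝ᵥ (R *ᵥ u) + 2 * (x ⬝ᵥ (N *ᵥ u))

lemma stageCost_transpose_mul_mul {Q : Matrix α α 𝕜} (hQ : Q.IsSymm) (M : Matrix α ι 𝕜)
    (C : Matrix α κ 𝕜) (x : ι → 𝕜) (u : κ → 𝕜) :
    stageCost (Mᵀ * Q * M) (Cᵀ * Q * C) (Mᵀ * Q * C) x u =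
      (M *ᵥ x + C *ᵥ u) ⬝ᵥ (Q *ᵥ (M *ᵥ x + C *ᵥ u)) := by
  have cross : (C *ᵥ u) ⬝ᵥ (Q *ᵥ (M *ᵥ x)) = (M *ᵥ x) ⬝ᵥ (Q *ᵥ (C *ᵥ u)) := by
    rw [dotProduct_mulVec, ← mulVec_transpose, hQ.eq, dotProduct_comm]
  simp only [stageCost, mulVec_add, dotProduct_add, add_dotProduct, ← mulVec_mulVec,
    dotProduct_mulVec _ Mᵀ, dotProduct_mulVec _ Cᵀ, vecMul_transpose, cross]
  ring

end StageCost

section Positivity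

variable {ι κ : Type*} [Fintype ι] [Fintype κ] {Q : Matrix ι ι ℝ} {R : Matrix κ κ ℝ}

lemma stageCost_zero_nonneg (hQ : Q.PosSemidef) (hR : R.PosSemidef) (x : ι → ℝ) (u : κ → ℝ) :
    0 ≤ stageCost Q R 0 x u := by
  have hx : 0 ≤ x ⬝ᵥ (Q *ᵥ x) := by simpa using hQ.dotProduct_mulVec_nonneg x
  have hu : 0 ≤ u ⬝ᵥ (R *ᵥ u) := by simpa using hR.dotProduct_mulVec_nonneg u
  simpa [stageCost] using add_nonneg hx hu

lemma stageCost_zero_pos (hQ : Q.PosDef) (hR : R.PosDef) {x : ι → ℝ} {u : κ → ℝ}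
    (hxu : ¬(x = 0 ∧ u = 0)) : 0 < stageCost Q R 0 x u := by
  have hx : 0 ≤ x ⬝ᵥ (Q *ᵥ x) := by simpa using hQ.posSemidef.dotProduct_mulVec_nonneg x
  have hu : 0 ≤ u ⬝ᵥ (R *ᵥ u) := by simpa using hR.posSemidef.dotProduct_mulVec_nonneg u
  simp only [stageCost, zero_mulVec, dotProduct_zero, mul_zero, add_zero]
  rcases not_and_or.mp hxu with hx0 | hu0
  · exact add_pos_of_pos_of_nonneg (by simpa using hQ.dotProduct_mulVec_pos hx0) hu
  · exact add_pos_of_nonneg_of_pos hx (by simpa using hR.dotProduct_mulVec_pos hu0)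

end Positivity

structure IsGeneralizedWeighting {ι κ 𝕜 : Type*} [Fintype ι] [DecidableEq ι] [Fintype κ]
    [CommRing 𝕜] (A : Matrix ι ι 𝕜) (B : Matrix ι κ 𝕜) (Q : Matrix ι ι 𝕜) (R : Matrix κ κ 𝕜)
    (Qg : ℕ → Matrix ι ι 𝕜) (Rg : ℕ → Matrix κ κ 𝕜) (Ng : ℕ → Matrix ι κ 𝕜) : Prop where
  Q_one : Qg 1 = Q
  R_one : Rg 1 = R
  N_one : Ng 1 = 0
  Q_succ : ∀ i, 1 ≤ i → Qg (i + 1) = Qg i + (A ^ i)ᵀ * Q * (A ^ i)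
  R_succ : ∀ i, 1 ≤ i → Rg (i + 1) =
    Rg i + (∑ q ∈ range i, A ^ q * B)ᵀ * Q * (∑ q ∈ range i, A ^ q * B) + R
  N_succ : ∀ i, 1 ≤ i → Ng (i + 1) = Ng i + (A ^ i)ᵀ * Q * (∑ q ∈ range i, A ^ q * B)

namespace IsGeneralizedWeighting

section CommRing

variable {ι κ 𝕜 : Type*} [Fintype ι] [DecidableEq ι] [Fintype κ] [CommRing 𝕜]
  {A : Matrix ι ι 𝕜} {B : Matrix ι κ 𝕜} {Q : Matrix ι ι 𝕜} {R : Matrix κ κ 𝕜}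
  {Qg : ℕ → Matrix ι ι 𝕜} {Rg : ℕ → Matrix κ κ 𝕜} {Ng : ℕ → Matrix ι κ 𝕜}

lemma stageCost_succ (hW : IsGeneralizedWeighting A B Q R Qg Rg Ng) (hQ : Q.IsSymm) {i : ℕ}
    (hi : 1 ≤ i) (x : ι → 𝕜) (u : κ → 𝕜) :
    stageCost (Qg (i + 1)) (Rg (i + 1)) (Ng (i + 1)) x u =
      stageCost (Qg i) (Rg i) (Ng i) x u +
        (A ^ i *ᵥ x + (∑ q ∈ range i, A ^ q * B) *ᵥ u) ⬝ᵥ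
          (Q *ᵥ (A ^ i *ᵥ x + (∑ q ∈ range i, A ^ q * B) *ᵥ u)) +
        u ⬝ᵥ (R *ᵥ u) := by
  rw [hW.Q_succ i hi, hW.R_succ i hi, hW.N_succ i hi, ← stageCost_transpose_mul_mul hQ]
  simp only [stageCost, add_mulVec, dotProduct_add]
  ring

end CommRing

variable {ι κ : Type*} [Fintype ι] [DecidableEq ι] [Fintype κ]
  {A : Matrix ι ι ℝ} {B : Matrix ι κ ℝ} {Q : Matrix ι ι ℝ} {R : Matrix κ κ ℝ}
  {Qg : ℕ → Matrix ι ι ℝ} {Rg : ℕ → Matrix κ κ ℝ} {Ng : ℕ → Matrix ι κ ℝ}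

lemma stageCost_zero_le (hW : IsGeneralizedWeighting A B Q R Qg Rg Ng) (hQ : Q.PosSemidef)
    (hR : R.PosSemidef) {i : ℕ} (hi : 1 ≤ i) (x : ι → ℝ) (u : κ → ℝ) :
    stageCost Q R 0 x u ≤ stageCost (Qg i) (Rg i) (Ng i) x u := by
  induction i, hi using Nat.le_induction with
  | base => rw [hW.Q_one, hW.R_one, hW.N_one]
  | succ i hi ih =>
    have hQsymm : Q.IsSymm := by simpa using hQ.isHermitian
    rw [hW.stageCost_succ hQsymm hi]
    have hstep := hQ.dotProduct_mulVec_nonneg (A ^ i *ᵥ x + (∑ q ∈ range i, A ^ q * B) *ᵥ u)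
    have hu := hR.dotProduct_mulVec_nonneg u
    simp only [star_trivial] at hstep hu
    linarith

lemma posDef_Qg (hW : IsGeneralizedWeighting A B Q R Qg Rg Ng) (hQ : Q.PosDef) {i : ℕ}
    (hi : 1 ≤ i) : (Qg i).PosDef := by
  induction i, hi using Nat.le_induction with
  | base => rwa [hW.Q_one]
  | succ i hi ih =>
    rw [hW.Q_succ i hi]
    exact ih.add_posSemidef (by simpa using hQ.posSemidef.conjTranspose_mul_mul_same (A ^ i))

lemma posDef_Rg (hW : IsGeneralizedWeighting A B Q R Qg Rg Ng) (hQ : Q.PosSemidef)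
    (hR : R.PosDef) {i : ℕ} (hi : 1 ≤ i) : (Rg i).PosDef := by
  induction i, hi using Nat.le_induction with
  | base => rwa [hW.R_one]
  | succ i hi ih =>
    rw [hW.R_succ i hi]
    refine (ih.add_posSemidef ?_).add hR
    simpa using hQ.conjTranspose_mul_mul_same (∑ q ∈ range i, A ^ q * B)

end IsGeneralizedWeighting

/-- positivity of the collapsed stage cost built from the
generalized weighting matrices. -/
theorem generalized_weighting_positivity {n m : ℕ}
    (A : Matrix (Fin n) (Fin n) ℝ) (B : Matrix (Fin n) (Fin m) ℝ)
    (Q : Matrix (Fin n) (Fin n) ℝ) (R : Matrix (Fin m) (Fin m) ℝ)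
    (Qg : ℕ → Matrix (Fin n) (Fin n) ℝ)
    (Rg : ℕ → Matrix (Fin m) (Fin m) ℝ)
    (Ng : ℕ → Matrix (Fin n) (Fin m) ℝ)
    (hQ1 : Qg 1 = Q) (hR1 : Rg 1 = R) (hN1 : Ng 1 = 0)
    (hQrec : ∀ i, 1 ≤ i → Qg (i + 1) = Qg i + (A ^ i)ᵀ * Q * (A ^ i))
    (hRrec : ∀ i, 1 ≤ i → Rg (i + 1) =
      Rg i + (∑ q ∈ Finset.range i, A ^ q * B)ᵀ * Q * (∑ q ∈ Finset.range i, A ^ q * B) + R)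
    (hNrec : ∀ i, 1 ≤ i → Ng (i + 1) =
      Ng i + (A ^ i)ᵀ * Q * (∑ q ∈ Finset.range i, A ^ q * B))
    (hQpsd : Q.PosSemidef) (hRpsd : R.PosSemidef) :
    (∀ i, 1 ≤ i → ∀ (x : Fin n → ℝ) (u : Fin m → ℝ),
      0 ≤ x ⬝ᵥ (Qg i *ᵥ x) + u ⬝ᵥ (Rg i *ᵥ u) + 2 * (x ⬝ᵥ (Ng i *ᵥ u))) ∧
    (Q.PosDef → R.PosDef → ∀ i, 1 ≤ i →
      (∀ (x : Fin n → ℝ) (u : Fin m → ℝ), ¬(x = 0 ∧ u = 0) →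
        0 < x ⬝ᵥ (Qg i *ᵥ x) + u ⬝ᵥ (Rg i *ᵥ u) + 2 * (x ⬝ᵥ (Ng i *ᵥ u))) ∧
      (Qg i).PosDef ∧ (Rg i).PosDef) := by
  have hW : IsGeneralizedWeighting A B Q R Qg Rg Ng := ⟨hQ1, hR1, hN1, hQrec, hRrec, hNrec⟩
  refine ⟨fun i hi x u => ?_, fun hQpd hRpd i hi => ⟨fun x u hxu => ?_, ?_, ?_⟩⟩
  · exact (stageCost_zero_nonneg hQpsd hRpsd x u).trans (hW.stageCost_zero_le hQpsd hRpsd hi x u)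
  · exact (stageCost_zero_pos hQpd hRpd hxu).trans_le (hW.stageCost_zero_le hQpsd hRpsd hi x u)
  · exact hW.posDef_Qg hQpd hi
  · exact hW.posDef_Rg hQpsd hRpd hi
end

section
/- Infinite-horizon value of the Riccati feedback (Lemma 2, equality part): let P be a symmetric positive semidefinite solution of the DARE with cross term for data (Ã, B̃, Q̃, R̃, Ñ), with gain L. If x : ℕ → ℝⁿ satisfies x(r+1) = (Ã − B̃ L) x(r) for all r and x(r) → 0 as r → ∞, then the series ∑_{r=0}^{∞} c(x(r), −L x(r)) converges and its sum equals x(0)ᵀ P x(0). -/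
/-!
The DARE says that `V x = xᵀ P x` is a cost-to-go for the closed loop `x ↦ (Ã − B̃L) x`:
`c(x, −Lx) = V x − V ((Ã − B̃L) x)`. Along the trajectory the partial sums therefore telescope to
`V (x 0) − V (x N)`, and `V (x N) → 0` because `x N → 0` and `V` is continuous.
-/

open Matrix Filter Topology

section ClosedLoop

variable {ι κ α : Type*} [Fintype ι] [Fintype κ] [CommRing α]

/-- Left-multiplying the gain equation by `Lᵀ` cancels exactly the terms of
`(A − BL)ᵀ P (A − BL)` that the DARE does not account for. -/
theorem closedLoop_lyapunov_of_riccati {A Q P : Matrix ι ι α} {B N : Matrix ι κ α}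
    {R : Matrix κ κ α} {L : Matrix κ ι α} (hP : Pᵀ = P)
    (hgain : (R + Bᵀ * P * B) * L = (Aᵀ * P * B + N)ᵀ)
    (hdare : P = Q + Aᵀ * P * A - (Aᵀ * P * B + N) * L) :
    Q + Lᵀ * R * L - N * L - Lᵀ * Nᵀ + (A - B * L)ᵀ * P * (A - B * L) = P := by
  have hgain' := congrArg (Lᵀ * ·) hgain
  conv_rhs => rw [hdare]
  simp only [transpose_add, transpose_sub, transpose_mul, transpose_transpose, hP,
    Matrix.add_mul, Matrix.sub_mul, Matrix.mul_add, Matrix.mul_sub, Matrix.mul_assoc] at hgain' ⊢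
  rw [← sub_eq_zero] at hgain' ⊢
  convert hgain' using 1
  abel

theorem closedLoop_stage_cost_eq_sub {A Q P : Matrix ι ι α} {B N : Matrix ι κ α}
    {R : Matrix κ κ α} {L : Matrix κ ι α}
    (hlyap : Q + Lᵀ * R * L - N * L - Lᵀ * Nᵀ + (A - B * L)ᵀ * P * (A - B * L) = P)
    (v : ι → α) :
    v ⬝ᵥ (Q *ᵥ v) + -(L *ᵥ v) ⬝ᵥ (R *ᵥ -(L *ᵥ v)) + 2 * (v ⬝ᵥ (N *ᵥ -(L *ᵥ v)))
      = v ⬝ᵥ (P *ᵥ v) - ((A - B * L) *ᵥ v) ⬝ᵥ (P *ᵥ ((A - B * L) *ᵥ v)) := by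
  have h := congrArg (fun M => v ⬝ᵥ (M *ᵥ v)) hlyap
  have hR : v ⬝ᵥ ((Lᵀ * R * L) *ᵥ v) = (L *ᵥ v) ⬝ᵥ (R *ᵥ (L *ᵥ v)) := by
    rw [← mulVec_mulVec, ← mulVec_mulVec, dotProduct_transpose_mulVec, dotProduct_comm]
  have hNL : v ⬝ᵥ ((N * L) *ᵥ v) = v ⬝ᵥ (N *ᵥ (L *ᵥ v)) := by rw [← mulVec_mulVec]
  have hLN : v ⬝ᵥ ((Lᵀ * Nᵀ) *ᵥ v) = v ⬝ᵥ (N *ᵥ (L *ᵥ v)) := by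
    rw [← mulVec_mulVec, dotProduct_transpose_mulVec, dotProduct_comm, dotProduct_transpose_mulVec]
  have hV : v ⬝ᵥ (((A - B * L)ᵀ * P * (A - B * L)) *ᵥ v)
      = ((A - B * L) *ᵥ v) ⬝ᵥ (P *ᵥ ((A - B * L) *ᵥ v)) := by
    rw [← mulVec_mulVec, ← mulVec_mulVec, dotProduct_transpose_mulVec, dotProduct_comm]
  rw [add_mulVec, sub_mulVec, sub_mulVec, add_mulVec, dotProduct_add, dotProduct_sub,
    dotProduct_sub, dotProduct_add, hR, hNL, hLN, hV] at h
  simp only [mulVec_neg, dotProduct_neg, neg_dotProduct, neg_neg]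
  linear_combination h

end ClosedLoop

theorem tendsto_sum_range_of_eq_sub_succ {E : Type*} [AddCommGroup E] [TopologicalSpace E]
    [IsTopologicalAddGroup E] {f g : ℕ → E} (h : ∀ r, f r = g r - g (r + 1))
    (hg : Tendsto g atTop (𝓝 0)) :
    Tendsto (fun N => ∑ r ∈ Finset.range N, f r) atTop (𝓝 (g 0)) := by
  simp_rw [h, Finset.sum_range_sub']
  simpa using tendsto_const_nhds.sub hg

theorem riccati_feedback_infinite_horizon_value_general {n m : ℕ}
    (At : Matrix (Fin n) (Fin n) ℝ) (Bt : Matrix (Fin n) (Fin m) ℝ)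
    (Qt : Matrix (Fin n) (Fin n) ℝ) (Rt : Matrix (Fin m) (Fin m) ℝ)
    (Nt : Matrix (Fin n) (Fin m) ℝ)
    (P : Matrix (Fin n) (Fin n) ℝ)
    (hP : P.PosSemidef)
    (hpd : (Rt + Btᵀ * P * Bt).PosDef)
    (L : Matrix (Fin m) (Fin n) ℝ)
    (hL : L = (Rt + Btᵀ * P * Bt)⁻¹ * (Atᵀ * P * Bt + Nt)ᵀ)
    (hdare : P = Qt + Atᵀ * P * At - (Atᵀ * P * Bt + Nt) * L)
    (c : (Fin n → ℝ) → (Fin m → ℝ) → ℝ)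
    (hc : ∀ x u, c x u = x ⬝ᵥ (Qt *ᵥ x) + u ⬝ᵥ (Rt *ᵥ u) + 2 * (x ⬝ᵥ (Nt *ᵥ u)))
    (x : ℕ → Fin n → ℝ)
    (hx : ∀ r, x (r + 1) = (At - Bt * L) *ᵥ x r)
    (hlim : Tendsto x atTop (nhds 0)) :
    Tendsto (fun N => ∑ r ∈ Finset.range N, c (x r) (-(L *ᵥ x r))) atTop
      (nhds (x 0 ⬝ᵥ (P *ᵥ x 0))) := by
  have hgain : (Rt + Btᵀ * P * Bt) * L = (Atᵀ * P * Bt + Nt)ᵀ := by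
    rw [hL, mul_nonsing_inv_cancel_left _ _ ((isUnit_iff_isUnit_det _).mp hpd.isUnit)]
  have hlyap := closedLoop_lyapunov_of_riccati (isHermitian_iff_isSymm.mp hP.isHermitian) hgain hdare
  have hV : Tendsto (fun r => x r ⬝ᵥ (P *ᵥ x r)) atTop (𝓝 0) := by
    have hcont : Continuous fun v : Fin n → ℝ => v ⬝ᵥ (P *ᵥ v) := by fun_prop
    simpa [Function.comp_def] using (hcont.tendsto 0).comp hlim
  refine tendsto_sum_range_of_eq_sub_succ (fun r => ?_) hV
  rw [hc, hx r]
  exact closedLoop_stage_cost_eq_sub hlyap (x r)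

/-- infinite-horizon value of the Riccati feedback (Lemma 2,
equality part). Along the closed-loop trajectory x(r+1) = (Ã - B̃L)x(r)
converging to zero, the partial sums of the stage costs under u = -Lx
converge to x(0)ᵀ P x(0). -/
theorem riccati_feedback_infinite_horizon_value {n m : ℕ}
    (At : Matrix (Fin n) (Fin n) ℝ) (Bt : Matrix (Fin n) (Fin m) ℝ)
    (Qt : Matrix (Fin n) (Fin n) ℝ) (Rt : Matrix (Fin m) (Fin m) ℝ)
    (Nt : Matrix (Fin n) (Fin m) ℝ)
    (hQt : Qt.IsSymm) (hRt : Rt.IsSymm)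
    (P : Matrix (Fin n) (Fin n) ℝ)
    (hP : P.PosSemidef)
    (hpd : (Rt + Btᵀ * P * Bt).PosDef)
    (L : Matrix (Fin m) (Fin n) ℝ)
    (hL : L = (Rt + Btᵀ * P * Bt)⁻¹ * (Atᵀ * P * Bt + Nt)ᵀ)
    (hdare : P = Qt + Atᵀ * P * At - (Atᵀ * P * Bt + Nt) * L)
    (c : (Fin n → ℝ) → (Fin m → ℝ) → ℝ)
    (hc : ∀ x u, c x u = x ⬝ᵥ (Qt *ᵥ x) + u ⬝ᵥ (Rt *ᵥ u) + 2 * (x ⬝ᵥ (Nt *ᵥ u)))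
    (x : ℕ → Fin n → ℝ)
    (hx : ∀ r, x (r + 1) = (At - Bt * L) *ᵥ x r)
    (hlim : Tendsto x atTop (nhds 0)) :
    Tendsto (fun N => ∑ r ∈ Finset.range N, c (x r) (-(L *ᵥ x r))) atTop
      (nhds (x 0 ⬝ᵥ (P *ᵥ x 0))) :=
  riccati_feedback_infinite_horizon_value_general At Bt Qt Rt Nt P hP hpd L hL hdare c hc x hx hlim
end

section
/- One-step value decrease of the self-triggered MPC value function (key step of Theorem 2): in the self-triggered value-function setting, let x ∈ ℝⁿ and let i* ∈ I⁰ attain the minimum defining V(x). Then V(M^{(i*)} x) ≤ (1−ε)·V(x) + β, where β = α/p* − (1−ε)·α/γ. -/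
open Matrix Finset

/-!
Evaluate `V` at `M⁽ⁱ*⁾x` with the index `p*`: the contraction hypothesis bounds the quadratic
part by `(1 - ε)·xᵀP⁽ⁱ*⁾x = (1 - ε)(V x - α/i*)`, and `α/i* ≥ α/γ` since `i* ≤ γ`.
-/

namespace Matrix

theorem dotProduct_mulVec_transpose_mul_mul {m n R : Type*} [Fintype m] [Fintype n]
    [CommSemiring R] (M : Matrix m n R) (P : Matrix m m R) (x : n → R) :
    x ⬝ᵥ ((Mᵀ * P * M) *ᵥ x) = (M *ᵥ x) ⬝ᵥ (P *ᵥ (M *ᵥ x)) := by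
  rw [← mulVec_mulVec, ← mulVec_mulVec, dotProduct_mulVec, vecMul_transpose]

theorem PosSemidef.dotProduct_mulVec_le {n R : Type*} [Fintype n] [CommRing R] [PartialOrder R]
    [IsOrderedAddMonoid R] [StarRing R] [TrivialStar R] {A B : Matrix n n R}
    (h : (A - B).PosSemidef) (x : n → R) : x ⬝ᵥ (B *ᵥ x) ≤ x ⬝ᵥ (A *ᵥ x) := by
  have := h.dotProduct_mulVec_nonneg x
  rwa [star_trivial, sub_mulVec, dotProduct_sub, sub_nonneg] at this

end Matrix

theorem self_triggered_one_step_decrease_general {n : ℕ}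
    (I0 : Finset ℕ) (hne : I0.Nonempty) (hpos : ∀ i ∈ I0, 0 < i)
    (γ : ℕ) (hγ : γ = I0.max' hne)
    (pstar : ℕ) (hpstar : pstar ∈ I0)
    (α : ℝ) (hα : 0 < α)
    (P : ℕ → Matrix (Fin n) (Fin n) ℝ)
    (M : ℕ → Matrix (Fin n) (Fin n) ℝ)
    (ε : ℝ) (hε1 : ε ≤ 1)
    (hcontr : ∀ i ∈ I0, ((1 - ε) • P i - (M i)ᵀ * P pstar * M i).PosSemidef)
    (V : (Fin n → ℝ) → ℝ)
    (hV : ∀ x : Fin n → ℝ, V x = I0.inf' hne (fun i => α / (i : ℝ) + x ⬝ᵥ (P i *ᵥ x)))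
    (x : Fin n → ℝ) (istar : ℕ) (histar : istar ∈ I0)
    (hattain : α / (istar : ℝ) + x ⬝ᵥ (P istar *ᵥ x) = V x) :
    V (M istar *ᵥ x) ≤ (1 - ε) * V x + (α / (pstar : ℝ) - (1 - ε) * (α / (γ : ℝ))) := by
  have hquad : (M istar *ᵥ x) ⬝ᵥ (P pstar *ᵥ (M istar *ᵥ x)) ≤ (1 - ε) * (V x - α / istar) := by
    rw [← dotProduct_mulVec_transpose_mul_mul, ← hattain, add_sub_cancel_left]
    simpa only [smul_mulVec, dotProduct_smul, smul_eq_mul]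
      using (hcontr istar histar).dotProduct_mulVec_le x
  have hdiv : α / γ ≤ α / istar :=
    div_le_div_of_nonneg_left hα.le (by exact_mod_cast hpos istar histar)
      (by exact_mod_cast hγ ▸ le_max' I0 istar histar)
  have hdiv' := mul_le_mul_of_nonneg_left hdiv (sub_nonneg.mpr hε1)
  calc V (M istar *ᵥ x)
      ≤ α / pstar + (M istar *ᵥ x) ⬝ᵥ (P pstar *ᵥ (M istar *ᵥ x)) := by
        rw [hV]
        exact inf'_le _ hpstar
    _ ≤ (1 - ε) * V x + (α / pstar - (1 - ε) * (α / γ)) := by linarith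

/-- one-step value decrease of the self-triggered MPC value
function V(x) = min_{i ∈ I⁰} (α/i + xᵀ P⁽ⁱ⁾ x): if i* attains the minimum at x,
then V(M⁽ⁱ*⁾x) ≤ (1-ε)V(x) + β with β = α/p* - (1-ε)α/γ. -/
theorem self_triggered_one_step_decrease {n : ℕ}
    (I0 : Finset ℕ) (hne : I0.Nonempty) (hpos : ∀ i ∈ I0, 0 < i)
    (γ : ℕ) (hγ : γ = I0.max' hne)
    (pstar : ℕ) (hpstar : pstar ∈ I0)
    (α : ℝ) (hα : 0 < α)
    (P : ℕ → Matrix (Fin n) (Fin n) ℝ) (hP : ∀ i ∈ I0, (P i).PosSemidef)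
    (M : ℕ → Matrix (Fin n) (Fin n) ℝ)
    (ε : ℝ) (hε0 : 0 < ε) (hε1 : ε ≤ 1)
    (hcontr : ∀ i ∈ I0, ((1 - ε) • P i - (M i)ᵀ * P pstar * M i).PosSemidef)
    (V : (Fin n → ℝ) → ℝ)
    (hV : ∀ x : Fin n → ℝ, V x = I0.inf' hne (fun i => α / (i : ℝ) + x ⬝ᵥ (P i *ᵥ x)))
    (x : Fin n → ℝ) (istar : ℕ) (histar : istar ∈ I0)
    (hattain : α / (istar : ℝ) + x ⬝ᵥ (P istar *ᵥ x) = V x) :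
    V (M istar *ᵥ x) ≤ (1 - ε) * V x + (α / (pstar : ℝ) - (1 - ε) * (α / (γ : ℝ))) :=
  self_triggered_one_step_decrease_general I0 hne hpos γ hγ pstar hpstar α hα P M ε hε1 hcontr V hV
    x istar histar hattain
end

section
/- Practical stability of single loop self-triggered MPC (Theorem 2): in the self-triggered value-function setting, let x : ℕ → ℝⁿ and i : ℕ → I⁰ be such that for every n, i(n) attains the minimum defining V(x(n)) and x(n+1) = M^{(i(n))} x(n). Then for every n, α/γ ≤ V(x(n)), and limsup_{n→∞} V(x(n)) ≤ (α/ε)·( 1/p* − (1−ε)/γ ). -/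
open Matrix Finset Filter

/-! Comparing the optimal horizon `i` at `x` with the fixed candidate `p*` at the successor
`M⁽ⁱ⁾ x`, the contraction inequality and `α / γ ≤ α / i` give the affine recursion
`V(x⁺) ≤ (1 - ε) V(x) + (α / p* - (1 - ε) α / γ)`. Its fixed point is
`(α / ε)(1 / p* - (1 - ε) / γ)`, and a recursion with rate `1 - ε < 1` is dominated by a
geometric sequence converging to that fixed point. -/

theorem Matrix.dotProduct_mulVec_le_of_posSemidef_sub {m R : Type*} [Fintype m] [Ring R]
    [PartialOrder R] [StarRing R] [IsOrderedAddMonoid R] {A B : Matrix m m R}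
    (h : (A - B).PosSemidef) (x : m → R) : star x ⬝ᵥ (B *ᵥ x) ≤ star x ⬝ᵥ (A *ᵥ x) := by
  simpa only [sub_mulVec, dotProduct_sub, sub_nonneg] using h.dotProduct_mulVec_nonneg x

theorem Matrix.dotProduct_transpose_mul_mul_mulVec_s12 {m R : Type*} [Fintype m] [CommSemiring R]
    (M P : Matrix m m R) (x : m → R) :
    x ⬝ᵥ ((Mᵀ * P * M) *ᵥ x) = (M *ᵥ x) ⬝ᵥ (P *ᵥ (M *ᵥ x)) := by
  rw [← mulVec_mulVec, ← mulVec_mulVec, dotProduct_mulVec, vecMul_transpose]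

theorem limsup_le_div_of_le_mul_add {u : ℕ → ℝ} {a r c : ℝ} (hr0 : 0 ≤ r) (hr1 : r < 1)
    (hlow : ∀ k, a ≤ u k) (hstep : ∀ k, u (k + 1) ≤ r * u k + c) :
    limsup u atTop ≤ c / (1 - r) := by
  set L := c / (1 - r) with hL
  have hfix : r * L + c = L := by
    rw [hL]
    field_simp [(sub_pos.2 hr1).ne']
    ring
  have hgeo : ∀ k, u k ≤ L + r ^ k * (u 0 - L) := by
    intro k
    induction k with
    | zero => simp
    | succ k ih =>
      calc u (k + 1) ≤ r * u k + c := hstep k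
        _ ≤ r * (L + r ^ k * (u 0 - L)) + c := by gcongr
        _ = L + r ^ (k + 1) * (u 0 - L) := by linear_combination hfix
  have htend : Tendsto (fun k => L + r ^ k * (u 0 - L)) atTop (nhds L) := by
    simpa using ((tendsto_pow_atTop_nhds_zero_of_lt_one hr0 hr1).mul_const (u 0 - L)).const_add L
  calc limsup u atTop ≤ limsup (fun k => L + r ^ k * (u 0 - L)) atTop :=
        limsup_le_limsup (.of_forall hgeo) (isCoboundedUnder_le_of_le atTop hlow)
          htend.isBoundedUnder_le
    _ = L := htend.limsup_eq

theorem div_max'_le_div (I : Finset ℕ) (hne : I.Nonempty) (hpos : ∀ i ∈ I, 0 < i)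
    {α : ℝ} (hα : 0 ≤ α) {i : ℕ} (hi : i ∈ I) : α / (I.max' hne : ℝ) ≤ α / i :=
  div_le_div_of_nonneg_left hα (by exact_mod_cast hpos i hi) (by exact_mod_cast I.le_max' i hi)

theorem div_max'_le_inf'_div_add (I : Finset ℕ) (hne : I.Nonempty) (hpos : ∀ i ∈ I, 0 < i)
    {α : ℝ} (hα : 0 ≤ α) {q : ℕ → ℝ} (hq : ∀ i ∈ I, 0 ≤ q i) :
    α / (I.max' hne : ℝ) ≤ I.inf' hne (fun i => α / (i : ℝ) + q i) := by
  refine le_inf' _ _ fun i hi => ?_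
  linarith [div_max'_le_div I hne hpos hα hi, hq i hi]

theorem inf'_mulVec_le_mul_add {m : Type*} [Fintype m] (I : Finset ℕ) (hne : I.Nonempty)
    (hpos : ∀ i ∈ I, 0 < i) {pstar : ℕ} (hpstar : pstar ∈ I) {α : ℝ} (hα : 0 ≤ α)
    {P : ℕ → Matrix m m ℝ} (M : Matrix m m ℝ) {ε : ℝ} (hε1 : ε ≤ 1)
    {i : ℕ} (hi : i ∈ I) (hcontr : ((1 - ε) • P i - Mᵀ * P pstar * M).PosSemidef)
    (x : m → ℝ) :
    I.inf' hne (fun j : ℕ => α / (j : ℝ) + (M *ᵥ x) ⬝ᵥ (P j *ᵥ (M *ᵥ x))) ≤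
      (1 - ε) * (α / (i : ℝ) + x ⬝ᵥ (P i *ᵥ x)) +
        (α / (pstar : ℝ) - (1 - ε) * (α / (I.max' hne : ℝ))) := by
  have hcand := inf'_le (fun j : ℕ => α / (j : ℝ) + (M *ᵥ x) ⬝ᵥ (P j *ᵥ (M *ᵥ x))) hpstar
  have hdecay : (M *ᵥ x) ⬝ᵥ (P pstar *ᵥ (M *ᵥ x)) ≤ (1 - ε) * (x ⬝ᵥ (P i *ᵥ x)) := by
    simpa only [star_trivial, dotProduct_transpose_mul_mul_mulVec_s12, smul_mulVec, dotProduct_smul,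
      smul_eq_mul] using dotProduct_mulVec_le_of_posSemidef_sub hcontr x
  have hdiv := mul_le_mul_of_nonneg_left (div_max'_le_div I hne hpos hα hi) (sub_nonneg.2 hε1)
  linarith

/-- Theorem 2: practical stability of the single loop
self-triggered MPC. Along closed-loop trajectories the value function
V(x) = min_{i ∈ I⁰} (α/i + xᵀ P⁽ⁱ⁾ x) is bounded below by α/γ and its limit
superior is bounded above by (α/ε)(1/p* - (1-ε)/γ). -/
theorem self_triggered_practical_stability {n : ℕ}
    (I0 : Finset ℕ) (hne : I0.Nonempty) (hpos : ∀ i ∈ I0, 0 < i)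
    (γ : ℕ) (hγ : γ = I0.max' hne)
    (pstar : ℕ) (hpstar : pstar ∈ I0)
    (α : ℝ) (hα : 0 < α)
    (P : ℕ → Matrix (Fin n) (Fin n) ℝ) (hP : ∀ i ∈ I0, (P i).PosSemidef)
    (M : ℕ → Matrix (Fin n) (Fin n) ℝ)
    (ε : ℝ) (hε0 : 0 < ε) (hε1 : ε ≤ 1)
    (hcontr : ∀ i ∈ I0, ((1 - ε) • P i - (M i)ᵀ * P pstar * M i).PosSemidef)
    (V : (Fin n → ℝ) → ℝ)
    (hV : ∀ x : Fin n → ℝ, V x = I0.inf' hne (fun i => α / (i : ℝ) + x ⬝ᵥ (P i *ᵥ x)))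
    (x : ℕ → Fin n → ℝ) (idx : ℕ → ℕ)
    (hidx : ∀ k, idx k ∈ I0)
    (hattain : ∀ k, α / (idx k : ℝ) + x k ⬝ᵥ (P (idx k) *ᵥ x k) = V (x k))
    (hdyn : ∀ k, x (k + 1) = M (idx k) *ᵥ x k) :
    (∀ k, α / (γ : ℝ) ≤ V (x k)) ∧
    Filter.limsup (fun k => V (x k)) Filter.atTop ≤
      (α / ε) * (1 / (pstar : ℝ) - (1 - ε) / (γ : ℝ)) := by
  have hquad : ∀ k, ∀ i ∈ I0, 0 ≤ x k ⬝ᵥ (P i *ᵥ x k) := fun k i hi => by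
    simpa using (hP i hi).dotProduct_mulVec_nonneg (x k)
  have hlow : ∀ k, α / (γ : ℝ) ≤ V (x k) := fun k => by
    rw [hV, hγ]
    exact div_max'_le_inf'_div_add I0 hne hpos hα.le (hquad k)
  have hstep : ∀ k, V (x (k + 1)) ≤
      (1 - ε) * V (x k) + (α / (pstar : ℝ) - (1 - ε) * (α / (γ : ℝ))) := fun k => by
    rw [hV (x (k + 1)), hdyn k, ← hattain k, hγ]
    exact inf'_mulVec_le_mul_add I0 hne hpos hpstar hα.le (M (idx k)) hε1 (hidx k)
      (hcontr (idx k) (hidx k)) (x k)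
  refine ⟨hlow, ?_⟩
  convert limsup_le_div_of_le_mul_add (by linarith) (by linarith) hlow hstep using 1
  rw [sub_sub_cancel]
  field_simp
end

section
/- Asymptotic stability of the origin (Corollary 1): in the self-triggered value-function setting, assume additionally that each P^{(i)} is positive definite and that p* = γ (alternatively, that α = 0 with α ≥ 0 allowed). Let x : ℕ → ℝⁿ and i : ℕ → I⁰ be such that for every n, i(n) attains the minimum defining V(x(n)) and x(n+1) = M^{(i(n))} x(n). Then x(n) → 0 as n → ∞. -/
/-!
`W k := V (x k) - α / γ` is a Lyapunov function that decays geometrically: the minimiser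
`i = idx k` gives `xᵀ P⁽ⁱ⁾ x ≤ W k` because `α / γ` is the smallest offset, while testing the
minimum defining `V (x (k + 1))` with `p*` and using the contraction hypothesis gives
`W (k + 1) ≤ (1 - ε) xᵀ P⁽ⁱ⁾ x`; here `p* = γ` or `α = 0` makes the offsets `α / p*` and
`α / γ` cancel. Since the finitely many `P⁽ⁱ⁾` are uniformly coercive, `‖x k‖²` is bounded by
a multiple of `W k`.
-/

open Matrix Finset Filter Topology

section QuadraticForm

variable {ι : Type*} [Fintype ι]

theorem Matrix.smul_dotProduct_mulVec_smul (A : Matrix ι ι ℝ) (a : ℝ) (v : ι → ℝ) :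
    (a • v) ⬝ᵥ (A *ᵥ (a • v)) = a ^ 2 * (v ⬝ᵥ (A *ᵥ v)) := by
  simp only [mulVec_smul, smul_dotProduct, dotProduct_smul, smul_eq_mul]
  ring

theorem Matrix.PosDef.exists_pos_mul_sq_norm_le {A : Matrix ι ι ℝ} (hA : A.PosDef) :
    ∃ c > 0, ∀ v : ι → ℝ, c * ‖v‖ ^ 2 ≤ v ⬝ᵥ (A *ᵥ v) := by
  rcases subsingleton_or_nontrivial (ι → ℝ) with _ | _
  · exact ⟨1, one_pos, fun v => by simp [Subsingleton.elim v 0]⟩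
  have hcont : Continuous fun v : ι → ℝ => v ⬝ᵥ (A *ᵥ v) :=
    continuous_id.dotProduct (continuous_const.matrix_mulVec continuous_id)
  obtain ⟨u, hu, hmin⟩ := (isCompact_sphere (0 : ι → ℝ) 1).exists_isMinOn
    (NormedSpace.sphere_nonempty.mpr zero_le_one) hcont.continuousOn
  have hu0 : u ≠ 0 := ne_zero_of_mem_sphere one_ne_zero ⟨u, hu⟩
  refine ⟨u ⬝ᵥ (A *ᵥ u), by simpa using hA.dotProduct_mulVec_pos hu0, fun v => ?_⟩
  obtain rfl | hv := eq_or_ne v 0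
  · simp
  have hv_sphere : ‖v‖⁻¹ • v ∈ Metric.sphere (0 : ι → ℝ) 1 := by
    simp [norm_smul, norm_ne_zero_iff.mpr hv]
  calc u ⬝ᵥ (A *ᵥ u) * ‖v‖ ^ 2
      ≤ (‖v‖⁻¹ • v) ⬝ᵥ (A *ᵥ (‖v‖⁻¹ • v)) * ‖v‖ ^ 2 := by gcongr; exact hmin hv_sphere
    _ = v ⬝ᵥ (A *ᵥ v) := by
      rw [smul_dotProduct_mulVec_smul]
      field_simp

theorem Finset.exists_pos_forall_mul_sq_norm_le_of_posDef {κ : Type*} (s : Finset κ)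
    {P : κ → Matrix ι ι ℝ} (hP : ∀ i ∈ s, (P i).PosDef) :
    ∃ c > 0, ∀ i ∈ s, ∀ v : ι → ℝ, c * ‖v‖ ^ 2 ≤ v ⬝ᵥ (P i *ᵥ v) := by
  have hsmall : ∀ i ∈ s, ∀ᶠ c in 𝓝[>] (0 : ℝ), ∀ v : ι → ℝ, c * ‖v‖ ^ 2 ≤ v ⬝ᵥ (P i *ᵥ v) := by
    intro i hi
    obtain ⟨c, hc, hcP⟩ := (hP i hi).exists_pos_mul_sq_norm_le
    filter_upwards [Ioo_mem_nhdsGT hc] with d hd v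
    exact (mul_le_mul_of_nonneg_right hd.2.le (sq_nonneg _)).trans (hcP v)
  obtain ⟨c, hcs, hc⟩ := (((eventually_all_finset s).2 hsmall).and self_mem_nhdsWithin).exists
  exact ⟨c, hc, hcs⟩

theorem Matrix.PosSemidef.dotProduct_mulVec_mulVec_le {A B M : Matrix ι ι ℝ} {r : ℝ}
    (h : (r • A - Mᵀ * B * M).PosSemidef) (v : ι → ℝ) :
    (M *ᵥ v) ⬝ᵥ (B *ᵥ (M *ᵥ v)) ≤ r * (v ⬝ᵥ (A *ᵥ v)) := by
  have h0 := h.dotProduct_mulVec_nonneg v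
  simp only [star_trivial, sub_mulVec, dotProduct_sub, smul_mulVec, dotProduct_smul, smul_eq_mul,
    ← mulVec_mulVec, dotProduct_transpose_mulVec, sub_nonneg] at h0
  rwa [dotProduct_comm] at h0

end QuadraticForm

theorem tendsto_zero_of_mul_sq_norm_le_of_geometric_decay {E : Type*} [SeminormedAddCommGroup E]
    {x : ℕ → E} {W : ℕ → ℝ} {c r : ℝ} (hc : 0 < c) (hr₀ : 0 ≤ r) (hr₁ : r < 1)
    (hxW : ∀ k, c * ‖x k‖ ^ 2 ≤ W k) (hW : ∀ k, W (k + 1) ≤ r * W k) :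
    Tendsto x atTop (𝓝 0) := by
  have hbound : ∀ k, ‖x k‖ ≤ √(r ^ k * W 0 / c) := fun k => by
    refine Real.le_sqrt_of_sq_le ?_
    rw [le_div_iff₀' hc]
    exact (hxW k).trans (le_geom hr₀ k fun j _ => hW j)
  have hlim : Tendsto (fun k => √(r ^ k * W 0 / c)) atTop (𝓝 0) := by
    simpa using (((tendsto_pow_atTop_nhds_zero_of_lt_one hr₀ hr₁).mul_const (W 0)).div_const c).sqrt
  exact squeeze_zero_norm hbound hlim

/-- Corollary 1: asymptotic stability of the origin for the
single loop self-triggered MPC, assuming each P⁽ⁱ⁾ is positive definite and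
either p* = γ or α = 0. -/
theorem self_triggered_asymptotic_stability {n : ℕ}
    (I0 : Finset ℕ) (hne : I0.Nonempty) (hpos : ∀ i ∈ I0, 0 < i)
    (γ : ℕ) (hγ : γ = I0.max' hne)
    (pstar : ℕ) (hpstar : pstar ∈ I0)
    (α : ℝ) (hα : 0 ≤ α)
    (P : ℕ → Matrix (Fin n) (Fin n) ℝ) (hP : ∀ i ∈ I0, (P i).PosDef)
    (M : ℕ → Matrix (Fin n) (Fin n) ℝ)
    (ε : ℝ) (hε0 : 0 < ε) (hε1 : ε ≤ 1)
    (hcontr : ∀ i ∈ I0, ((1 - ε) • P i - (M i)ᵀ * P pstar * M i).PosSemidef)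
    (hcase : pstar = γ ∨ α = 0)
    (V : (Fin n → ℝ) → ℝ)
    (hV : ∀ x : Fin n → ℝ, V x = I0.inf' hne (fun i => α / (i : ℝ) + x ⬝ᵥ (P i *ᵥ x)))
    (x : ℕ → Fin n → ℝ) (idx : ℕ → ℕ)
    (hidx : ∀ k, idx k ∈ I0)
    (hattain : ∀ k, α / (idx k : ℝ) + x k ⬝ᵥ (P (idx k) *ᵥ x k) = V (x k))
    (hdyn : ∀ k, x (k + 1) = M (idx k) *ᵥ x k) :
    Tendsto x atTop (nhds 0) := by
  obtain ⟨c, hc, hcoercive⟩ := I0.exists_pos_forall_mul_sq_norm_le_of_posDef hP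
  have hoffset : ∀ i ∈ I0, α / γ ≤ α / i := fun i hi =>
    div_le_div_of_nonneg_left hα (by exact_mod_cast hpos i hi)
      (by exact_mod_cast hγ ▸ I0.le_max' i hi)
  have hoffset_pstar : α / pstar = α / γ := by
    rcases hcase with rfl | rfl <;> simp
  have hq_le : ∀ k, x k ⬝ᵥ (P (idx k) *ᵥ x k) ≤ V (x k) - α / γ := fun k => by
    linarith [hattain k, hoffset _ (hidx k)]
  refine tendsto_zero_of_mul_sq_norm_le_of_geometric_decay hc (sub_nonneg.2 hε1) (by linarith)
    (fun k => (hcoercive _ (hidx k) _).trans (hq_le k)) fun k => ?_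
  have hV_next : V (x (k + 1)) ≤ α / pstar + x (k + 1) ⬝ᵥ (P pstar *ᵥ x (k + 1)) :=
    (hV _).trans_le (inf'_le _ hpstar)
  have hdecay := (hcontr _ (hidx k)).dotProduct_mulVec_mulVec_le (x k)
  rw [← hdyn] at hdecay
  calc V (x (k + 1)) - α / γ ≤ (1 - ε) * (x k ⬝ᵥ (P (idx k) *ᵥ x k)) := by linarith
    _ ≤ (1 - ε) * (V (x k) - α / γ) := mul_le_mul_of_nonneg_left (hq_le k) (sub_nonneg.2 hε1)
end

section
/- Practical stability with time-varying feasible sets (Theorem 5, per-loop form): in the self-triggered value-function setting, let (I_n)_{n∈ℕ} be a sequence of nonempty subsets of I⁰ with p* ∈ I_n for all n ≥ 1. Let x : ℕ → ℝⁿ and i : ℕ → ℕ be such that for every n, i(n) ∈ I_n attains the minimum V_n = min_{j ∈ I_n} ( α/j + x(n)ᵀ P^{(j)} x(n) ), and x(n+1) = M^{(i(n))} x(n). Then for every n, α/γ ≤ V_n, and limsup_{n→∞} V_n ≤ (α/ε)·( 1/p* − (1−ε)/γ ). -/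
/-! With `c = α / p* - (1 - ε) α / γ`, the value function obeys `V (k + 1) ≤ (1 - ε) V k + c`:
at time `k + 1` the waiting time `p*` is feasible, the contraction hypothesis shrinks the
quadratic part of the cost paid at time `k` by `1 - ε`, and that cost's `α / i` part is at
least `α / γ`. Iterating, `V k - c / ε` decays like `(1 - ε) ^ k`, and `c / ε` is the bound. -/

open Matrix Finset Filter

theorem Matrix.dotProduct_mulVec_mulVec_le_of_posSemidef_sub {ι : Type*} [Fintype ι]
    {P Q M : Matrix ι ι ℝ} {c : ℝ} (h : (c • P - Mᵀ * Q * M).PosSemidef) (v : ι → ℝ) :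
    (M *ᵥ v) ⬝ᵥ (Q *ᵥ (M *ᵥ v)) ≤ c * (v ⬝ᵥ (P *ᵥ v)) := by
  have hv := h.dotProduct_mulVec_nonneg v
  simp only [star_trivial, sub_mulVec, dotProduct_sub, smul_mulVec, dotProduct_smul, smul_eq_mul,
    ← mulVec_mulVec, dotProduct_mulVec v Mᵀ, vecMul_transpose] at hv
  linarith

theorem Real.limsup_le_div_of_le_mul_add {v : ℕ → ℝ} {q c : ℝ} (hq0 : 0 ≤ q) (hq1 : q < 1)
    (hv : IsBoundedUnder (· ≥ ·) atTop v) (hstep : ∀ k, v (k + 1) ≤ q * v k + c) :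
    limsup v atTop ≤ c / (1 - q) := by
  set L := c / (1 - q)
  have hfix : q * L + c = L := by
    simp only [L]
    field_simp [(sub_pos.2 hq1).ne']
    ring
  have hgeom : ∀ k, v k ≤ L + q ^ k * (v 0 - L) := by
    intro k
    induction k with
    | zero => simp
    | succ k ih =>
      calc v (k + 1) ≤ q * v k + c := hstep k
        _ ≤ q * (L + q ^ k * (v 0 - L)) + c := by gcongr
        _ = L + q ^ (k + 1) * (v 0 - L) := by linear_combination hfix
  have htend : Tendsto (fun k => L + q ^ k * (v 0 - L)) atTop (nhds L) := by
    simpa using ((tendsto_pow_atTop_nhds_zero_of_lt_one hq0 hq1).mul_const (v 0 - L)).const_add L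
  calc limsup v atTop ≤ limsup (fun k => L + q ^ k * (v 0 - L)) atTop :=
        limsup_le_limsup (.of_forall hgeom) hv.isCoboundedUnder_le htend.isBoundedUnder_le
    _ = L := htend.limsup_eq

theorem self_triggered_practical_stability_time_varying_general {n : ℕ}
    (I0 : Finset ℕ) (hne : I0.Nonempty) (hpos : ∀ i ∈ I0, 0 < i)
    (γ : ℕ) (hγ : γ = I0.max' hne)
    (pstar : ℕ)
    (α : ℝ) (hα : 0 < α)
    (P : ℕ → Matrix (Fin n) (Fin n) ℝ) (hP : ∀ i ∈ I0, (P i).PosSemidef)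
    (M : ℕ → Matrix (Fin n) (Fin n) ℝ)
    (ε : ℝ) (hε0 : 0 < ε) (hε1 : ε ≤ 1)
    (hcontr : ∀ i ∈ I0, ((1 - ε) • P i - (M i)ᵀ * P pstar * M i).PosSemidef)
    (Iset : ℕ → Finset ℕ) (hIsub : ∀ k, Iset k ⊆ I0)
    (hIne : ∀ k, (Iset k).Nonempty)
    (hIp : ∀ k, 1 ≤ k → pstar ∈ Iset k)
    (x : ℕ → Fin n → ℝ) (idx : ℕ → ℕ)
    (Vn : ℕ → ℝ)
    (hVn : ∀ k, Vn k =
      (Iset k).inf' (hIne k) (fun j => α / (j : ℝ) + x k ⬝ᵥ (P j *ᵥ x k)))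
    (hidx : ∀ k, idx k ∈ Iset k)
    (hattain : ∀ k, α / (idx k : ℝ) + x k ⬝ᵥ (P (idx k) *ᵥ x k) = Vn k)
    (hdyn : ∀ k, x (k + 1) = M (idx k) *ᵥ x k) :
    (∀ k, α / (γ : ℝ) ≤ Vn k) ∧
    Filter.limsup Vn Filter.atTop ≤
      (α / ε) * (1 / (pstar : ℝ) - (1 - ε) / (γ : ℝ)) := by
  have hdiv : ∀ j ∈ I0, α / γ ≤ α / j := fun j hj =>
    div_le_div_of_nonneg_left hα.le (by exact_mod_cast hpos j hj)
      (by exact_mod_cast hγ ▸ I0.le_max' j hj)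
  have hquad : ∀ j ∈ I0, ∀ v, 0 ≤ v ⬝ᵥ (P j *ᵥ v) := fun j hj v => by
    simpa using (hP j hj).dotProduct_mulVec_nonneg v
  have hlow : ∀ k, α / γ ≤ Vn k := fun k => by
    rw [hVn k]
    exact le_inf' _ _ fun j hj =>
      le_add_of_le_of_nonneg (hdiv j (hIsub k hj)) (hquad j (hIsub k hj) (x k))
  have hstep : ∀ k, Vn (k + 1) ≤ (1 - ε) * Vn k + (α / pstar - (1 - ε) * (α / γ)) := by
    intro k
    have hi := hIsub k (hidx k)
    have hnext : Vn (k + 1) ≤ α / pstar + x (k + 1) ⬝ᵥ (P pstar *ᵥ x (k + 1)) := by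
      rw [hVn]
      exact inf'_le _ (hIp _ k.succ_pos)
    have hcontract := dotProduct_mulVec_mulVec_le_of_posSemidef_sub (hcontr _ hi) (x k)
    rw [← hdyn] at hcontract
    nlinarith [hattain k, hdiv _ hi]
  refine ⟨hlow, (Real.limsup_le_div_of_le_mul_add (by linarith) (by linarith)
    ⟨α / γ, eventually_map.2 (.of_forall hlow)⟩ hstep).trans_eq ?_⟩
  rw [sub_sub_cancel]
  field_simp

/-- Theorem 5, per-loop form: practical stability of the
self-triggered MPC with time-varying feasible sets Iₙ ⊆ I⁰ containing p* for
all n ≥ 1. -/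
theorem self_triggered_practical_stability_time_varying {n : ℕ}
    (I0 : Finset ℕ) (hne : I0.Nonempty) (hpos : ∀ i ∈ I0, 0 < i)
    (γ : ℕ) (hγ : γ = I0.max' hne)
    (pstar : ℕ) (hpstar : pstar ∈ I0)
    (α : ℝ) (hα : 0 < α)
    (P : ℕ → Matrix (Fin n) (Fin n) ℝ) (hP : ∀ i ∈ I0, (P i).PosSemidef)
    (M : ℕ → Matrix (Fin n) (Fin n) ℝ)
    (ε : ℝ) (hε0 : 0 < ε) (hε1 : ε ≤ 1)
    (hcontr : ∀ i ∈ I0, ((1 - ε) • P i - (M i)ᵀ * P pstar * M i).PosSemidef)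
    (Iset : ℕ → Finset ℕ) (hIsub : ∀ k, Iset k ⊆ I0)
    (hIne : ∀ k, (Iset k).Nonempty)
    (hIp : ∀ k, 1 ≤ k → pstar ∈ Iset k)
    (x : ℕ → Fin n → ℝ) (idx : ℕ → ℕ)
    (Vn : ℕ → ℝ)
    (hVn : ∀ k, Vn k =
      (Iset k).inf' (hIne k) (fun j => α / (j : ℝ) + x k ⬝ᵥ (P j *ᵥ x k)))
    (hidx : ∀ k, idx k ∈ Iset k)
    (hattain : ∀ k, α / (idx k : ℝ) + x k ⬝ᵥ (P (idx k) *ᵥ x k) = Vn k)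
    (hdyn : ∀ k, x (k + 1) = M (idx k) *ᵥ x k) :
    (∀ k, α / (γ : ℝ) ≤ Vn k) ∧
    Filter.limsup Vn Filter.atTop ≤
      (α / ε) * (1 / (pstar : ℝ) - (1 - ε) / (γ : ℝ)) :=
  self_triggered_practical_stability_time_varying_general I0 hne hpos γ hγ pstar α hα P hP M ε hε0
    hε1 hcontr Iset hIsub hIne hIp x idx Vn hVn hidx hattain hdyn
end
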